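/- Let γ : ℝ → ℂ be a C² immersed loop with Whitney index ind(γ) = k, where k ∈ ℤ, k ≠ 0. Then γ is regularly homotopic to the k-fold circle t ↦ exp(2πik t): there exists a continuous map H : ℝ × [0,1] → ℂ with H(t+1, s) = H(t, s) for all t, s, such that each H(·, s) is continuously differentiable in t with ∂H/∂t(t, s) ≠ 0 for all t, s, the map (t, s) ↦ ∂H/∂t(t, s) is continuous, H(·, 0) = γ, and H(t, 1) = exp(2πik t) for all t. -/

import Mathlib

/-!
Write `γ' = exp w₀` with `w₀ (t + 1) = w₀ t + 2πik`, and likewise `c' = exp w₁` for the `k`-fold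
circle `c`. The loops `f_s = exp ((1 - s) w₀ + s w₁)` are nonvanishing velocities joining `γ'` to
`c'`, but their primitives need not close up. Since `Im w_s` increases by `2πk ≠ 0` over a period,
`f_s` takes two antipodal directions, so `‖∫ f_s‖ < ∫ ‖f_s‖`. Hence `f_s - ‖f_s‖ ∫ f_s / ∫ ‖f_s‖`
still never vanishes and has zero mean, and its primitive is the regular homotopy.
-/

open Function Set MeasureTheory Complex
open scoped Real

theorem Function.Periodic.deriv {𝕜 F : Type*} [NontriviallyNormedField 𝕜] [NormedAddCommGroup F]
    [NormedSpace 𝕜 F] {f : 𝕜 → F} {c : 𝕜} (hf : Periodic f c) : Periodic (deriv f) c :=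
  fun x => by rw [← deriv_comp_add_const, hf.funext]

theorem exp_integral_logDeriv {φ : ℝ → ℂ} (hφ : ContDiff ℝ 1 φ) (hφ0 : ∀ t, φ t ≠ 0) (a t : ℝ) :
    φ a * exp (∫ τ in a..t, logDeriv φ τ) = φ t := by
  have hlog : Continuous (logDeriv φ) := (hφ.continuous_deriv le_rfl).div hφ.continuous hφ0
  set ψ : ℝ → ℂ := fun t => φ t * exp (-∫ τ in a..t, logDeriv φ τ)
  have hψ : ∀ t, HasDerivAt ψ 0 t := by
    intro t
    refine (((hφ.differentiable one_ne_zero t).hasDerivAt).mul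
      (hlog.integral_hasStrictDerivAt a t).hasDerivAt.neg.cexp).congr_deriv ?_
    rw [logDeriv_apply]
    field_simp [hφ0 t]
    ring
  have hconst : ψ t = ψ a :=
    is_const_of_deriv_eq_zero (fun x => (hψ x).differentiableAt) (fun x => (hψ x).deriv) t a
  simp only [ψ, intervalIntegral.integral_same, neg_zero, exp_zero, mul_one] at hconst
  rw [← hconst, mul_assoc, ← exp_add, neg_add_cancel, exp_zero, mul_one]

/-- For a loop `γ`, the monodromy `κ` of the logarithm `w` of `γ'` is `2πi` times the Whitney
index. -/
structure IsLogVelocity (γ w : ℝ → ℂ) (κ : ℂ) : Prop where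
  continuous : Continuous w
  hasDerivAt : ∀ t, HasDerivAt γ (exp (w t)) t
  add_one : ∀ t, w (t + 1) = w t + κ

theorem IsLogVelocity.integral_exp_eq_zero {γ w : ℝ → ℂ} {κ : ℂ} (h : IsLogVelocity γ w κ)
    (hγ : γ 1 = γ 0) : ∫ t in 0..1, exp (w t) = 0 := by
  rw [intervalIntegral.integral_eq_sub_of_hasDerivAt (fun t _ => h.hasDerivAt t)
    ((continuous_exp.comp h.continuous).intervalIntegrable 0 1), hγ, sub_self]

theorem exists_isLogVelocity {γ : ℝ → ℂ} (hγ : ContDiff ℝ 2 γ) (hper : Periodic γ 1)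
    (himm : ∀ t, deriv γ t ≠ 0) :
    ∃ w, IsLogVelocity γ w (∫ τ in 0..1, logDeriv (deriv γ) τ) := by
  have hγ' : ContDiff ℝ 1 (deriv γ) := (contDiff_succ_iff_deriv.1 hγ).2.2
  have hlog : Continuous (logDeriv (deriv γ)) :=
    (hγ'.continuous_deriv le_rfl).div hγ'.continuous himm
  refine ⟨fun t => log (deriv γ 0) + ∫ τ in 0..t, logDeriv (deriv γ) τ,
    ⟨by fun_prop, fun t => ?_, fun t => ?_⟩⟩
  · rw [exp_add, exp_log (himm 0), exp_integral_logDeriv hγ' himm]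
    exact (hγ.differentiable (by norm_num) t).hasDerivAt
  · have hlogper : Periodic (logDeriv (deriv γ)) 1 := hper.deriv.deriv.div hper.deriv
    rw [hlogper.intervalIntegral_add_eq_add 0 t (fun _ _ => hlog.intervalIntegrable _ _),
      zero_add, add_assoc]

theorem isLogVelocity_exp_mul {κ : ℂ} (hκ : κ ≠ 0) :
    IsLogVelocity (fun t : ℝ => exp (κ * t)) (fun t => log κ + κ * t) κ := by
  refine ⟨by fun_prop, fun t => ?_, fun t => by push_cast; ring⟩
  rw [exp_add, exp_log hκ]
  exact ((hasDerivAt_id (t : ℂ)).const_mul κ |>.comp_ofReal.cexp).congr_deriv (by simp [mul_comm])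

theorem norm_intervalIntegral_lt_of_not_sameRay {E : Type*} [NormedAddCommGroup E]
    [InnerProductSpace ℝ E] [CompleteSpace E] {F : ℝ → E} {a b t₀ t₁ : ℝ}
    (hF : ContinuousOn F (Icc a b)) (ht₀ : t₀ ∈ Icc a b) (ht₁ : t₁ ∈ Icc a b)
    (hF₀₁ : ¬SameRay ℝ (F t₀) (F t₁)) :
    ‖∫ t in a..b, F t‖ < ∫ t in a..b, ‖F t‖ := by
  have hab : a < b := by
    refine (ht₀.1.trans ht₀.2).lt_of_ne fun hab => hF₀₁ ?_
    subst hab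
    obtain rfl : t₀ = a := le_antisymm ht₀.2 ht₀.1
    obtain rfl : t₁ = t₀ := le_antisymm ht₁.2 ht₁.1
    exact SameRay.refl _
  have hFi : IntervalIntegrable F volume a b := hF.intervalIntegrable_of_Icc hab.le
  set I := ∫ t in a..b, F t
  by_cases hI : I = 0
  · rw [hI, norm_zero]
    refine intervalIntegral.integral_pos hab hF.norm (fun _ _ => norm_nonneg _) ⟨t₀, ht₀, ?_⟩
    exact norm_pos_iff.2 fun h => hF₀₁ (h ▸ SameRay.zero_left _)
  -- `⟪I, F t⟫ ≤ ‖I‖ ‖F t‖`, with equality on all of `[a, b]` only if all `F t` are on `I`'s ray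
  have hlt : ∫ t in a..b, inner ℝ I (F t) < ∫ t in a..b, ‖I‖ * ‖F t‖ := by
    refine intervalIntegral.integral_lt_integral_of_continuousOn_of_le_of_exists_lt hab
      (continuousOn_const.inner hF) (continuousOn_const.mul hF.norm)
      (fun t _ => real_inner_le_norm _ _) ?_
    by_contra! heq
    have hray : ∀ t ∈ Icc a b, SameRay ℝ I (F t) := fun t ht =>
      sameRay_iff_norm_smul_eq.2 (inner_eq_norm_mul_iff_real.1
        ((real_inner_le_norm _ _).antisymm (heq t ht))).symm
    exact hF₀₁ (((hray t₀ ht₀).symm.trans (hray t₁ ht₁)) fun h => absurd h hI)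
  have hII : ∫ t in a..b, inner ℝ I (F t) = inner ℝ I I :=
    (innerSL ℝ I).intervalIntegral_comp_comm hFi
  rw [hII, real_inner_self_eq_norm_mul_norm, intervalIntegral.integral_const_mul] at hlt
  exact lt_of_mul_lt_mul_left hlt (norm_nonneg I)

theorem exists_not_sameRay_exp {W : ℝ → ℂ} {a b : ℝ} (hab : a ≤ b) (hW : ContinuousOn W (Icc a b))
    (hπ : π ≤ |(W b - W a).im|) : ∃ t ∈ Icc a b, ¬SameRay ℝ (exp (W a)) (exp (W t)) := by
  obtain ⟨y, hy, hyπ⟩ : ∃ y ∈ uIcc 0 (W b - W a).im, y = π ∨ y = -π := by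
    rcases le_total 0 (W b - W a).im with h | h
    · rw [abs_of_nonneg h] at hπ
      exact ⟨π, by rw [uIcc_of_le h]; exact ⟨Real.pi_pos.le, hπ⟩, .inl rfl⟩
    · rw [abs_of_nonpos h] at hπ
      exact ⟨-π, by rw [uIcc_of_ge h]; constructor <;> linarith [Real.pi_pos], .inr rfl⟩
  have hcont : ContinuousOn (fun t => (W t - W a).im) (uIcc a b) := by
    rw [uIcc_of_le hab]; fun_prop
  obtain ⟨t, ht, hty⟩ := intermediate_value_uIcc hcont (by simpa using hy)
  refine ⟨t, uIcc_of_le hab ▸ ht, fun hray => exp_ne_zero (W a) ?_⟩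
  have hexp : exp (W t - W a) = -(Real.exp (W t - W a).re : ℂ) := by
    rw [exp_eq_exp_re_mul_sin_add_cos]
    rcases hyπ with rfl | rfl <;> simp [hty]
  refine eq_zero_of_sameRay_neg_smul_right (neg_lt_zero.2 (Real.exp_pos (W t - W a).re)) ?_
  rwa [Complex.real_smul, ofReal_neg, ← hexp, ← exp_add, sub_add_cancel]

theorem norm_integral_exp_lt {W : ℝ → ℂ} (hW : Continuous W) {k : ℤ} (hk : k ≠ 0)
    (hW1 : W 1 = W 0 + 2 * π * I * k) :
    ‖∫ t in 0..1, exp (W t)‖ < ∫ t in 0..1, ‖exp (W t)‖ := by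
  have hπ : π ≤ |(W 1 - W 0).im| := by
    have hk1 : (1:ℝ) ≤ |(k:ℝ)| := by exact_mod_cast Int.one_le_abs hk
    have : π ≤ 2 * π * |(k:ℝ)| := by nlinarith [Real.pi_pos]
    simpa [hW1, abs_mul, abs_of_pos Real.pi_pos] using this
  obtain ⟨t, ht, hray⟩ := exists_not_sameRay_exp zero_le_one hW.continuousOn hπ
  exact norm_intervalIntegral_lt_of_not_sameRay (continuous_exp.comp hW).continuousOn
    ⟨le_rfl, zero_le_one⟩ ht hray

section LoopHomotopy

variable {E : Type*} [NormedAddCommGroup E] [NormedSpace ℝ E]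

noncomputable def closeUp (f : ℝ → E) (t : ℝ) : E :=
  f t - ‖f t‖ • (∫ τ in 0..1, ‖f τ‖)⁻¹ • ∫ τ in 0..1, f τ

theorem closeUp_eq_self {f : ℝ → E} (hf : ∫ τ in 0..1, f τ = 0) : closeUp f = f := by
  ext t
  simp [closeUp, hf]

theorem Function.Periodic.closeUp {f : ℝ → E} {c : ℝ} (hf : Periodic f c) :
    Periodic (closeUp f) c := fun t => by
  simp only [_root_.closeUp, hf t]

theorem closeUp_ne_zero {f : ℝ → E} {t : ℝ} (hlt : ‖∫ τ in 0..1, f τ‖ < ∫ τ in 0..1, ‖f τ‖)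
    (ht : f t ≠ 0) : closeUp f t ≠ 0 := by
  have hpos : 0 < ∫ τ in 0..1, ‖f τ‖ := (norm_nonneg _).trans_lt hlt
  rw [closeUp, sub_ne_zero]
  refine fun h => (?_ : ‖f t‖ < ‖f t‖).false
  conv_lhs => rw [h]
  rw [norm_smul, norm_smul, norm_norm, norm_inv, Real.norm_of_nonneg hpos.le]
  refine mul_lt_of_lt_one_right (norm_pos_iff.2 ht) ?_
  rwa [inv_mul_lt_one₀ hpos]

theorem integral_closeUp [CompleteSpace E] {f : ℝ → E} (hf : IntervalIntegrable f volume 0 1) :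
    ∫ t in 0..1, closeUp f t = 0 := by
  simp only [closeUp]
  rw [intervalIntegral.integral_sub hf (hf.norm.smul_continuousOn continuousOn_const),
    intervalIntegral.integral_smul_const, smul_smul]
  by_cases h : ∫ τ in 0..1, ‖f τ‖ = 0
  · have : ∫ τ in 0..1, f τ = 0 := norm_le_zero_iff.1 <| by
      simpa only [h] using
        intervalIntegral.norm_integral_le_integral_norm (μ := volume) (f := f) zero_le_one
    simp [this]
  · rw [mul_inv_cancel₀ h, one_smul, sub_self]

theorem continuous_uncurry_closeUp {f : ℝ → ℝ → E} (hf : Continuous (uncurry f))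
    (hne : ∀ s, ∫ τ in 0..1, ‖f s τ‖ ≠ 0) : Continuous (uncurry fun s => closeUp (f s)) := by
  have hnorm : Continuous fun s => ∫ τ in 0..1, ‖f s τ‖ :=
    intervalIntegral.continuous_parametric_intervalIntegral_of_continuous' hf.norm 0 1
  have hint : Continuous fun s => ∫ τ in 0..1, f s τ :=
    intervalIntegral.continuous_parametric_intervalIntegral_of_continuous' hf 0 1
  exact hf.sub (hf.norm.smul (((hnorm.inv₀ hne).smul hint).comp continuous_fst))

def IsRegularLoopHomotopy (H : ℝ → ℝ → E) : Prop :=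
  ContinuousOn (fun q : ℝ × ℝ => H q.1 q.2) (univ ×ˢ Icc 0 1) ∧
    (∀ t : ℝ, ∀ s ∈ Icc (0:ℝ) 1, H (t + 1) s = H t s) ∧
    (∀ s ∈ Icc (0:ℝ) 1, ContDiff ℝ 1 (fun t => H t s)) ∧
    (∀ t : ℝ, ∀ s ∈ Icc (0:ℝ) 1, deriv (fun t' => H t' s) t ≠ 0) ∧
    ContinuousOn (fun q : ℝ × ℝ => deriv (fun t' => H t' q.2) q.1) (univ ×ˢ Icc 0 1)

noncomputable def integralHomotopy (p : ℝ → E) (v : ℝ → ℝ → E) (t s : ℝ) : E :=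
  p s + ∫ τ in 0..t, v s τ

variable [CompleteSpace E] {p : ℝ → E} {v : ℝ → ℝ → E}

theorem hasDerivAt_integralHomotopy {s : ℝ} (hv : Continuous (v s)) (t : ℝ) :
    HasDerivAt (fun t => integralHomotopy p v t s) (v s t) t :=
  (hv.integral_hasStrictDerivAt 0 t).hasDerivAt.const_add (p s)

theorem integralHomotopy_eq {γ : ℝ → E} {s : ℝ} (hv : Continuous (v s))
    (hγ : ∀ t, HasDerivAt γ (v s t) t) (hp : p s = γ 0) (t : ℝ) :
    integralHomotopy p v t s = γ t := by
  rw [integralHomotopy, intervalIntegral.integral_eq_sub_of_hasDerivAt (fun τ _ => hγ τ)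
    (hv.intervalIntegrable 0 t), hp, add_sub_cancel]

theorem isRegularLoopHomotopy_integralHomotopy (hp : Continuous p) (hv : Continuous (uncurry v))
    (hper : ∀ s, Periodic (v s) 1) (hmean : ∀ s, ∫ τ in 0..1, v s τ = 0)
    (hne : ∀ s t, v s t ≠ 0) : IsRegularLoopHomotopy (integralHomotopy p v) := by
  have hvs : ∀ s, Continuous (v s) := fun s => hv.comp (Continuous.prodMk_right s)
  have hderiv : ∀ s t, deriv (fun t => integralHomotopy p v t s) t = v s t := fun s t =>
    (hasDerivAt_integralHomotopy (hvs s) t).deriv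
  refine ⟨?_, fun t s _ => ?_, fun s _ => ?_, fun t s _ => ?_, ?_⟩
  · exact (hp.comp continuous_snd |>.add
      ((intervalIntegral.continuous_parametric_primitive_of_continuous hv).comp
        continuous_swap)).continuousOn
  · rw [integralHomotopy, integralHomotopy, (hper s).intervalIntegral_add_eq_add 0 t
      (fun _ _ => (hvs s).intervalIntegrable _ _), zero_add, hmean s, add_zero]
  · rw [contDiff_one_iff_deriv, funext (hderiv s)]
    exact ⟨fun t => (hasDerivAt_integralHomotopy (hvs s) t).differentiableAt, hvs s⟩
  · rw [hderiv]; exact hne s t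
  · simp only [hderiv]
    exact (hv.comp continuous_swap).continuousOn

end LoopHomotopy

theorem exists_isRegularLoopHomotopy {γ₀ γ₁ w₀ w₁ : ℝ → ℂ} {k : ℤ} (hk : k ≠ 0)
    (h₀ : IsLogVelocity γ₀ w₀ (2 * π * I * k)) (h₁ : IsLogVelocity γ₁ w₁ (2 * π * I * k))
    (hγ₀ : γ₀ 1 = γ₀ 0) (hγ₁ : γ₁ 1 = γ₁ 0) :
    ∃ H : ℝ → ℝ → ℂ, IsRegularLoopHomotopy H ∧ (∀ t, H t 0 = γ₀ t) ∧ ∀ t, H t 1 = γ₁ t := by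
  set W : ℝ → ℝ → ℂ := fun s t => (1 - s) * w₀ t + s * w₁ t
  have hW : Continuous (uncurry W) := by
    have := h₀.continuous; have := h₁.continuous; fun_prop
  have hW_add_one : ∀ s t, W s (t + 1) = W s t + 2 * π * I * k := fun s t => by
    simp only [W, h₀.add_one, h₁.add_one]; ring
  set f : ℝ → ℝ → ℂ := fun s t => exp (W s t)
  have hf : Continuous (uncurry f) := continuous_exp.comp hW
  have hfs : ∀ s, Continuous (f s) := fun s => hf.comp (Continuous.prodMk_right s)
  have hf_per : ∀ s, Periodic (f s) 1 := fun s t => by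
    simp only [f, hW_add_one, exp_add,
      show 2 * π * I * k = k * (2 * π * I) by ring, exp_int_mul_two_pi_mul_I, mul_one]
  have hf_lt : ∀ s, ‖∫ t in 0..1, f s t‖ < ∫ t in 0..1, ‖f s t‖ := fun s =>
    norm_integral_exp_lt (hW.comp (Continuous.prodMk_right s)) hk (by simpa using hW_add_one s 0)
  set v : ℝ → ℝ → ℂ := fun s => closeUp (f s)
  have hv₀ : v 0 = fun t => exp (w₀ t) := by
    simp only [v, f, W, ofReal_zero, sub_zero, one_mul, zero_mul, add_zero]
    exact closeUp_eq_self (h₀.integral_exp_eq_zero hγ₀)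
  have hv₁ : v 1 = fun t => exp (w₁ t) := by
    simp only [v, f, W, ofReal_one, sub_self, zero_mul, zero_add, one_mul]
    exact closeUp_eq_self (h₁.integral_exp_eq_zero hγ₁)
  refine ⟨integralHomotopy (fun s => (1 - s) * γ₀ 0 + s * γ₁ 0) v,
    isRegularLoopHomotopy_integralHomotopy (by fun_prop)
      (continuous_uncurry_closeUp hf fun s => ((norm_nonneg _).trans_lt (hf_lt s)).ne')
      (fun s => (hf_per s).closeUp) (fun s => integral_closeUp ((hfs s).intervalIntegrable 0 1))
      (fun s t => closeUp_ne_zero (hf_lt s) (exp_ne_zero _)),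
    integralHomotopy_eq (hv₀ ▸ continuous_exp.comp h₀.continuous) (hv₀ ▸ h₀.hasDerivAt) (by simp),
    integralHomotopy_eq (hv₁ ▸ continuous_exp.comp h₁.continuous) (hv₁ ▸ h₁.hasDerivAt) (by simp)⟩

/-- Whitney–Graustein: a `C²` immersed loop of Whitney index `k ≠ 0` is regularly
homotopic to the `k`-fold circle `t ↦ exp(2πik t)`. -/
theorem whitney_graustein_to_k_fold_circle (γ : ℝ → ℂ) (hγ : ContDiff ℝ 2 γ)
    (hper : ∀ t, γ (t + 1) = γ t) (himm : ∀ t, deriv γ t ≠ 0)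
    (k : ℤ) (hk : k ≠ 0)
    (hind : (1 / (2 * (Real.pi : ℂ) * Complex.I)) *
        (∫ t in (0:ℝ)..1, deriv (deriv γ) t / deriv γ t) = (k : ℂ)) :
    ∃ H : ℝ → ℝ → ℂ,
      ContinuousOn (fun q : ℝ × ℝ => H q.1 q.2) (Set.univ ×ˢ Set.Icc 0 1) ∧
      (∀ t : ℝ, ∀ s ∈ Set.Icc (0:ℝ) 1, H (t + 1) s = H t s) ∧
      (∀ s ∈ Set.Icc (0:ℝ) 1, ContDiff ℝ 1 (fun t => H t s)) ∧
      (∀ t : ℝ, ∀ s ∈ Set.Icc (0:ℝ) 1, deriv (fun t' => H t' s) t ≠ 0) ∧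
      ContinuousOn (fun q : ℝ × ℝ => deriv (fun t' => H t' q.2) q.1)
        (Set.univ ×ˢ Set.Icc 0 1) ∧
      (∀ t, H t 0 = γ t) ∧
      (∀ t : ℝ, H t 1 = Complex.exp (2 * (Real.pi : ℂ) * Complex.I * (k : ℂ) * (t : ℂ))) := by
  have hκ : (2 * π * I * k : ℂ) ≠ 0 := by simp [hk, Real.pi_ne_zero]
  have hindex : ∫ t in 0..1, logDeriv (deriv γ) t = 2 * π * I * k := by
    rw [one_div_mul_eq_div, div_eq_iff (by simp [Real.pi_ne_zero])] at hind
    exact hind.trans (mul_comm _ _)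
  obtain ⟨w, hw⟩ := exists_isLogVelocity hγ hper himm
  rw [hindex] at hw
  obtain ⟨H, ⟨hcont, hperH, hC1, himmH, hderiv⟩, hH₀, hH₁⟩ :=
    exists_isRegularLoopHomotopy hk hw (isLogVelocity_exp_mul hκ) (by simpa using hper 0)
      (by simp [show 2 * π * I * k = k * (2 * π * I) by ring, exp_int_mul_two_pi_mul_I])
  exact ⟨H, hcont, hperH, hC1, himmH, hderiv, hH₀, hH₁⟩
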